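/- arXiv:1202.4622 — 2 statements merged into one kernel-verified Lean document; each statement's English description precedes it below -/
import Mathlib

section
/- Let α be irrational with a_{ν+1} = 1 and let d_{1,ν}² = (q_{ν+1} - q_{ν-1})/(ξ_{ν-1} - ξ_{ν+1}). Then d_{1,ν}² · ξ_{ν+1}/q_{ν+1} ≤ 1 ≤ d_{1,ν}² · ξ_{ν-1}/q_{ν-1}. -/
open Real Filter Set

/-- The function F from the paper. -/
noncomputable def Fm (x y : ℝ) : ℝ := (1 - x*y)^2 / (4*(1+x*y)*(1-x)*(1-y))

/-- The function G from the paper. -/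
noncomputable def Gm (x y : ℝ) : ℝ := (x + y + 1)/4

/-- Complete quotients of α : cq α 0 = α, cq α (n+1) = 1/{cq α n}. -/
noncomputable def cq (α : ℝ) : ℕ → ℝ
  | 0 => α
  | n+1 => (Int.fract (cq α n))⁻¹

/-- Partial quotients a_n of the continued fraction of α. -/
noncomputable def pquot (α : ℝ) (n : ℕ) : ℤ := ⌊cq α n⌋

/-- Denominators q_n of the convergents of α. -/
noncomputable def qd (α : ℝ) : ℕ → ℝ
  | 0 => 1
  | 1 => (pquot α 1 : ℝ)
  | n+2 => (pquot α (n+2) : ℝ) * qd α (n+1) + qd α n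

/-- Numerators p_n of the convergents of α. -/
noncomputable def pnum (α : ℝ) : ℕ → ℝ
  | 0 => (pquot α 0 : ℝ)
  | 1 => (pquot α 1 : ℝ) * (pquot α 0 : ℝ) + 1
  | n+2 => (pquot α (n+2) : ℝ) * pnum α (n+1) + pnum α n

/-- ξ_n = |q_n α - p_n|. -/
noncomputable def xi (α : ℝ) (n : ℕ) : ℝ := |qd α n * α - pnum α n|

/-- α*_n = [0; a_n, ..., a_1] = q_{n-1}/q_n. -/
noncomputable def astar (α : ℝ) (n : ℕ) : ℝ := qd α (n-1) / qd α n

/-- Distance from x to the nearest integer. -/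
noncomputable def nidist (x : ℝ) : ℝ := |x - round x|

/-- The ν-th convergent denominator satisfies the Legendre condition. -/
noncomputable def LegendreDen (α : ℝ) (ν : ℕ) : Prop :=
  |α - pnum α ν / qd α ν| < 1/(2 * (qd α ν)^2)

/-- ψ_α(t) = min_{1 ≤ x ≤ t} ‖xα‖. -/
noncomputable def psif (α : ℝ) (t : ℝ) : ℝ :=
  sInf {d : ℝ | ∃ x : ℤ, 1 ≤ x ∧ (x:ℝ) ≤ t ∧ d = nidist (x*α)}

/-! With `aₙ₊₁ = 1` the recurrences `qₙ₊₁ = aₙ₊₁ qₙ + qₙ₋₁` and `ξₙ₋₁ = aₙ₊₁ ξₙ + ξₙ₊₁` turn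
`d₁,ₙ²` into `qₙ / ξₙ`, and both inequalities then say that `qₙ` is nondecreasing and `ξₙ`
decreasing. The latter holds because `ξₙ₊₁ = ξₙ / αₙ₊₂`, the complete quotient `αₙ₊₂` being
greater than `1`. -/

namespace ContinuedFraction

variable {α : ℝ}

lemma irrational_cq (hα : Irrational α) : ∀ n, Irrational (cq α n)
  | 0 => hα
  | n + 1 => ((irrational_cq hα n).sub_intCast ⌊cq α n⌋).inv

lemma cq_sub_pquot (n : ℕ) : cq α n - pquot α n = (cq α (n + 1))⁻¹ :=
  (inv_inv _).symm

lemma one_lt_cq_succ (hα : Irrational α) (n : ℕ) : 1 < cq α (n + 1) :=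
  one_lt_inv_iff₀.mpr
    ⟨Int.fract_pos.mpr fun h => (irrational_cq hα n).ne_int _ h, Int.fract_lt_one _⟩

lemma cq_succ_pos (hα : Irrational α) (n : ℕ) : 0 < cq α (n + 1) :=
  zero_lt_one.trans (one_lt_cq_succ hα n)

lemma one_le_pquot_succ (hα : Irrational α) (n : ℕ) : 1 ≤ pquot α (n + 1) :=
  Int.le_floor.mpr (by exact_mod_cast (one_lt_cq_succ hα n).le)

lemma one_le_qd_and_qd_le_qd_succ (hα : Irrational α) :
    ∀ n, 1 ≤ qd α n ∧ qd α n ≤ qd α (n + 1)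
  | 0 => ⟨le_rfl, by change (1 : ℝ) ≤ pquot α 1; exact_mod_cast one_le_pquot_succ hα 0⟩
  | n + 1 => by
    obtain ⟨h1, h2⟩ := one_le_qd_and_qd_le_qd_succ hα n
    have ha : (1 : ℝ) ≤ pquot α (n + 2) := by exact_mod_cast one_le_pquot_succ hα (n + 1)
    refine ⟨h1.trans h2, ?_⟩
    change qd α (n + 1) ≤ pquot α (n + 2) * qd α (n + 1) + qd α n
    nlinarith

noncomputable def convergentError (α : ℝ) (n : ℕ) : ℝ := qd α n * α - pnum α n

lemma convergentError_zero : convergentError α 0 = (cq α 1)⁻¹ := by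
  change 1 * α - pquot α 0 = (Int.fract α)⁻¹⁻¹
  rw [one_mul, inv_inv]
  rfl

lemma convergentError_succ (hα : Irrational α) (n : ℕ) :
    convergentError α (n + 1) = -convergentError α n / cq α (n + 2) := by
  induction n with
  | zero =>
    have hc : cq α 1 ≠ 0 := (cq_succ_pos hα 0).ne'
    have e1 : convergentError α 1 = pquot α 1 * convergentError α 0 - 1 := by
      simp only [convergentError, qd, pnum]; ring
    rw [e1, convergentError_zero, div_eq_mul_inv, ← cq_sub_pquot 1]
    field_simp
    ring
  | succ n ih =>
    have hc : cq α (n + 2) ≠ 0 := (cq_succ_pos hα (n + 1)).ne'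
    have hrec : convergentError α (n + 2) =
        pquot α (n + 2) * convergentError α (n + 1) + convergentError α n := by
      simp only [convergentError, qd, pnum]; ring
    rw [hrec, div_eq_mul_inv, ← cq_sub_pquot, ih]
    field_simp
    ring

lemma xi_eq_abs_convergentError (n : ℕ) : xi α n = |convergentError α n| := rfl

lemma xi_succ (hα : Irrational α) (n : ℕ) : xi α (n + 1) = xi α n / cq α (n + 2) := by
  rw [xi_eq_abs_convergentError, convergentError_succ hα, abs_div, abs_neg,
    abs_of_pos (cq_succ_pos hα (n + 1))]
  rfl

lemma xi_pos (hα : Irrational α) : ∀ n, 0 < xi α n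
  | 0 => by
    rw [xi_eq_abs_convergentError, convergentError_zero]
    exact abs_pos.mpr (inv_ne_zero (cq_succ_pos hα 0).ne')
  | n + 1 => by
    rw [xi_succ hα]
    exact div_pos (xi_pos hα n) (cq_succ_pos hα (n + 1))

lemma xi_succ_le (hα : Irrational α) (n : ℕ) : xi α (n + 1) ≤ xi α n := by
  rw [xi_succ hα]
  exact div_le_self (xi_pos hα n).le (one_lt_cq_succ hα (n + 1)).le

lemma xi_eq_pquot_mul_add (hα : Irrational α) (n : ℕ) :
    xi α n = pquot α (n + 2) * xi α (n + 1) + xi α (n + 2) := by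
  have hc : cq α (n + 2) ≠ 0 := (cq_succ_pos hα (n + 1)).ne'
  rw [xi_succ hα (n + 1), div_eq_mul_inv, ← cq_sub_pquot, xi_succ hα n]
  field_simp
  ring

end ContinuedFraction

open ContinuedFraction in
theorem stmt8 (α : ℝ) (hα : Irrational α) (ν : ℕ) (hν : 1 ≤ ν)
    (ha : pquot α (ν+1) = 1) :
    ((qd α (ν+1) - qd α (ν-1)) / (xi α (ν-1) - xi α (ν+1))) * (xi α (ν+1) / qd α (ν+1)) ≤ 1 ∧
    1 ≤ ((qd α (ν+1) - qd α (ν-1)) / (xi α (ν-1) - xi α (ν+1))) * (xi α (ν-1) / qd α (ν-1)) := by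
  obtain ⟨m, rfl⟩ : ∃ m, ν = m + 1 := ⟨ν - 1, by omega⟩
  simp only [Nat.add_sub_cancel]
  have hq : qd α (m + 2) - qd α m = qd α (m + 1) := by
    change (pquot α (m + 2) : ℝ) * qd α (m + 1) + qd α m - qd α m = _
    rw [ha]; ring
  have hxi : xi α m - xi α (m + 2) = xi α (m + 1) := by
    rw [xi_eq_pquot_mul_add hα m, ha]; ring
  obtain ⟨hq₀, hq₀₁⟩ := one_le_qd_and_qd_le_qd_succ hα m
  obtain ⟨hq₁, hq₁₂⟩ := one_le_qd_and_qd_le_qd_succ hα (m + 1)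
  have hx₁ := xi_pos hα (m + 1)
  rw [hq, hxi, div_mul_div_comm, div_mul_div_comm]
  constructor
  · rw [div_le_one (mul_pos hx₁ (by linarith)), mul_comm (xi α (m + 1))]
    exact mul_le_mul hq₁₂ (xi_succ_le hα (m + 1)) (xi_pos hα (m + 2)).le (by linarith)
  · rw [one_le_div (mul_pos hx₁ (by linarith)), mul_comm (qd α (m + 1))]
    exact mul_le_mul (xi_succ_le hα m) hq₀₁ (by linarith) (xi_pos hα m).le
end

section
/- Let α be irrational with complete quotients α_ν and reversed quotients α*_ν satisfying α*_ν + α_{ν+1} > 2 and α*_{ν+1} + α_{ν+2} > 2, and let d_{2,ν}² = (q_{ν+1} - q_ν)/(ξ_ν - ξ_{ν+1}). Then d_{2,ν}² · ξ_{ν+1}/q_{ν+1} ≤ 1 ≤ d_{2,ν}² · ξ_ν/q_ν. -/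
/-! Write `A = α_{ν+2}`, `B = α_{ν+1}` and `q'' , q, q'` for `q_{ν-1}, q_ν, q_{ν+1}`. Since
`ξ_ν = A ξ_{ν+1}`, we get `d_{2,ν}² = (q' - q) / ((A - 1) ξ_{ν+1})`, so the left inequality says
`(2 - A) q' ≤ q`, which is the second hypothesis. The right one says `(2A - 1) q ≤ A q'`; as
`q' = a_{ν+1} q + q''` with `a_{ν+1} = B - 1/A`, this is `(2 - B) q ≤ q''`, the first hypothesis. -/

open Real Filter Set

lemma Irrational.fract_pos {x : ℝ} (h : Irrational x) : 0 < Int.fract x :=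
  Int.fract_pos.mpr (h.ne_int ⌊x⌋)

lemma irrational_cq {α : ℝ} (hα : Irrational α) (n : ℕ) : Irrational (cq α n) := by
  induction n with
  | zero => exact hα
  | succ n ih => exact (ih.sub_intCast ⌊cq α n⌋).inv

lemma one_lt_cq_succ {α : ℝ} (hα : Irrational α) (n : ℕ) : 1 < cq α (n+1) :=
  one_lt_inv_iff₀.mpr ⟨(irrational_cq hα n).fract_pos, Int.fract_lt_one _⟩

lemma cq_succ_pos {α : ℝ} (hα : Irrational α) (n : ℕ) : 0 < cq α (n+1) :=
  zero_lt_one.trans (one_lt_cq_succ hα n)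

lemma pquot_eq_cq_sub_inv (α : ℝ) (n : ℕ) : (pquot α n : ℝ) = cq α n - (cq α (n+1))⁻¹ := by
  change (⌊cq α n⌋ : ℝ) = cq α n - ((Int.fract (cq α n))⁻¹)⁻¹
  rw [inv_inv, Int.self_sub_fract]

lemma one_le_pquot_succ {α : ℝ} (hα : Irrational α) (n : ℕ) : (1 : ℝ) ≤ pquot α (n+1) := by
  have : (1 : ℤ) ≤ pquot α (n+1) := Int.le_floor.mpr (by exact_mod_cast (one_lt_cq_succ hα n).le)
  exact_mod_cast this

lemma qd_pos {α : ℝ} (hα : Irrational α) (n : ℕ) : 0 < qd α n := by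
  induction n using Nat.twoStepInduction with
  | zero => exact one_pos
  | one => exact one_pos.trans_le (one_le_pquot_succ hα 0)
  | more n h₀ h₁ =>
    change 0 < (pquot α (n+2) : ℝ) * qd α (n+1) + qd α n
    nlinarith [one_le_pquot_succ hα (n+1)]

lemma qd_succ_of_one_le (α : ℝ) {n : ℕ} (hn : 1 ≤ n) :
    qd α (n+1) = pquot α (n+1) * qd α n + qd α (n-1) := by
  obtain ⟨m, rfl⟩ := Nat.exists_eq_add_of_le' hn
  rfl

noncomputable def xiSigned (α : ℝ) (n : ℕ) : ℝ := qd α n * α - pnum α n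

lemma xiSigned_zero (α : ℝ) : xiSigned α 0 = Int.fract α := by
  simp only [xiSigned, qd, pnum, pquot, cq, Int.fract]
  ring

lemma xiSigned_one (α : ℝ) : xiSigned α 1 = pquot α 1 * xiSigned α 0 - 1 := by
  simp only [xiSigned, qd, pnum]
  ring

lemma xiSigned_add_two (α : ℝ) (n : ℕ) :
    xiSigned α (n+2) = pquot α (n+2) * xiSigned α (n+1) + xiSigned α n := by
  simp only [xiSigned, qd, pnum]
  ring

lemma cq_mul_xiSigned_add_xiSigned {α : ℝ} (hα : Irrational α) (n : ℕ) :
    cq α (n+2) * xiSigned α (n+1) + xiSigned α n = 0 := by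
  induction n with
  | zero =>
    have := (cq_succ_pos hα 1).ne'
    have h1 : cq α 1 * xiSigned α 0 = 1 := by
      rw [xiSigned_zero]
      exact inv_mul_cancel₀ hα.fract_pos.ne'
    rw [xiSigned_one, pquot_eq_cq_sub_inv]
    field_simp
    linear_combination cq α 2 * h1
  | succ n ih =>
    have := (cq_succ_pos hα (n+2)).ne'
    rw [xiSigned_add_two, pquot_eq_cq_sub_inv]
    field_simp
    linear_combination cq α (n+3) * ih

lemma xiSigned_ne_zero {α : ℝ} (hα : Irrational α) (n : ℕ) : xiSigned α n ≠ 0 := by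
  induction n with
  | zero => exact xiSigned_zero α ▸ hα.fract_pos.ne'
  | succ n ih =>
    intro h
    have := cq_mul_xiSigned_add_xiSigned hα n
    rw [h, mul_zero, zero_add] at this
    exact ih this

lemma xi_pos {α : ℝ} (hα : Irrational α) (n : ℕ) : 0 < xi α n :=
  abs_pos.mpr (xiSigned_ne_zero hα n)

lemma xi_eq_cq_mul_xi_succ {α : ℝ} (hα : Irrational α) (n : ℕ) :
    xi α n = cq α (n+2) * xi α (n+1) := by
  change |xiSigned α n| = _ * |xiSigned α (n+1)|
  rw [eq_neg_of_add_eq_zero_right (cq_mul_xiSigned_add_xiSigned hα n), abs_neg, abs_mul,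
    abs_of_pos (cq_succ_pos hα (n+1))]

/-- `d_{2,ν}²` -/
noncomputable def d2sq (α : ℝ) (ν : ℕ) : ℝ :=
  (qd α (ν+1) - qd α ν) / (xi α ν - xi α (ν+1))

lemma d2sq_eq {α : ℝ} (hα : Irrational α) (ν : ℕ) :
    d2sq α ν = (qd α (ν+1) - qd α ν) / ((cq α (ν+2) - 1) * xi α (ν+1)) := by
  rw [d2sq, xi_eq_cq_mul_xi_succ hα ν]
  ring_nf

lemma d2sq_mul_xi_succ_div_qd_succ_le_one {α : ℝ} (hα : Irrational α) (ν : ℕ)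
    (h : astar α (ν+1) + cq α (ν+2) > 2) :
    d2sq α ν * (xi α (ν+1) / qd α (ν+1)) ≤ 1 := by
  have hq' := qd_pos hα (ν+1)
  have hA := one_lt_cq_succ hα (ν+1)
  have hξ := xi_pos hα (ν+1)
  have key : qd α (ν+1) - qd α ν ≤ (cq α (ν+2) - 1) * qd α (ν+1) := by
    have : 2 - cq α (ν+2) < qd α ν / qd α (ν+1) := by
      change qd α ν / qd α (ν+1) + _ > 2 at h
      linarith
    rw [lt_div_iff₀ hq'] at this
    linarith
  rw [d2sq_eq hα, div_mul_div_comm, div_le_one (mul_pos (mul_pos (by linarith) hξ) hq')]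
  linarith [mul_le_mul_of_nonneg_right key hξ.le]

lemma one_le_d2sq_mul_xi_div_qd {α : ℝ} (hα : Irrational α) {ν : ℕ} (hν : 1 ≤ ν)
    (h : astar α ν + cq α (ν+1) > 2) :
    1 ≤ d2sq α ν * (xi α ν / qd α ν) := by
  have hq := qd_pos hα ν
  have hA := one_lt_cq_succ hα (ν+1)
  have hξ := xi_pos hα (ν+1)
  have hq'' : (2 - cq α (ν+1)) * qd α ν < qd α (ν-1) := by
    have : 2 - cq α (ν+1) < qd α (ν-1) / qd α ν := by
      change qd α (ν-1) / qd α ν + _ > 2 at h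
      linarith
    rwa [lt_div_iff₀ hq] at this
  have hq' : cq α (ν+2) * qd α (ν+1)
      = (cq α (ν+2) * cq α (ν+1) - 1) * qd α ν + cq α (ν+2) * qd α (ν-1) := by
    have := (cq_succ_pos hα (ν+1)).ne'
    rw [qd_succ_of_one_le α hν, pquot_eq_cq_sub_inv]
    field_simp
  have key : (cq α (ν+2) - 1) * qd α ν ≤ cq α (ν+2) * (qd α (ν+1) - qd α ν) := by
    linarith [mul_lt_mul_of_pos_left hq'' (cq_succ_pos hα (ν+1))]
  rw [d2sq_eq hα, xi_eq_cq_mul_xi_succ hα ν, div_mul_div_comm,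
    le_div_iff₀ (mul_pos (mul_pos (by linarith) hξ) hq), one_mul]
  linarith [mul_le_mul_of_nonneg_right key hξ.le]

theorem stmt9 (α : ℝ) (hα : Irrational α) (ν : ℕ) (hν : 1 ≤ ν)
    (h1 : astar α ν + cq α (ν+1) > 2) (h2 : astar α (ν+1) + cq α (ν+2) > 2) :
    ((qd α (ν+1) - qd α ν) / (xi α ν - xi α (ν+1))) * (xi α (ν+1) / qd α (ν+1)) ≤ 1 ∧
    1 ≤ ((qd α (ν+1) - qd α ν) / (xi α ν - xi α (ν+1))) * (xi α ν / qd α ν) :=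
  ⟨d2sq_mul_xi_succ_div_qd_succ_le_one hα ν h2, one_le_d2sq_mul_xi_div_qd hα hν h1⟩
end
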